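/- arXiv:1407.8496 — 3 statements merged into one kernel-verified Lean document; each statement's English description precedes it below -/
import Mathlib

section
/- If a finite group G has exactly one irreducible complex character of degree greater than 1, then |C| = |G'| - 1 for the unique nontrivial conjugacy class C contained in G', and every conjugacy class outside G' has size |G'|. -/
open scoped Classical Pointwise

/-- `χ : G → ℂ` is an irreducible (complex) character of `G`. -/
def IsIrrChar (G : Type) [Group G] (χ : G → ℂ) : Prop :=
  ∃ V : FDRep ℂ G, CategoryTheory.Simple V ∧ χ = V.character

/-- A nonlinear irreducible character: irreducible of degree `> 1`. -/
def IsNonlinChar (G : Type) [Group G] (χ : G → ℂ) : Prop :=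
  IsIrrChar G χ ∧ 1 < (χ 1).re

/-- The conjugacy class of `g` in `G`. -/
def conjClass {G : Type*} [Group G] (g : G) : Set G := {x | IsConj g x}

/-!
Irreducible characters span the class functions: if a class function `f` is orthogonal to all
of them, the central element `∑ g, f g • g` of `ℂ[G]` acts on each simple `ℂ[G]`-module by a
scalar of trace `0` (Schur), hence by `0`, and `ℂ[G]` is semisimple, so `f = 0`. The irreducible
characters of `G` are the `|G/G'|` linear ones and the nonlinear one, so `G` has at most
`|G/G'| + 1` conjugacy classes. Each class lies in a coset of `G'`, every coset contains one,
and `G'` contains at least two since `G` is not abelian; this leaves no room for any further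
class.
-/

open CategoryTheory Module MonoidAlgebra

theorem LinearMap.trace_mul_of_finrank_eq_one {K M : Type*} [Field K] [AddCommGroup M]
    [Module K M] (h : finrank K M = 1) (u v : Module.End K M) :
    trace K M (u * v) = trace K M u * trace K M v := by
  have : FiniteDimensional K M := .of_finrank_pos (by omega)
  obtain ⟨a, rfl, -⟩ := u.existsUnique_eq_smul_id_of_finrank_eq_one h
  obtain ⟨b, rfl, -⟩ := v.existsUnique_eq_smul_id_of_finrank_eq_one h
  rw [smul_mul_smul_comm, Module.End.mul_eq_comp, LinearMap.id_comp]
  simp [h]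

theorem Function.Surjective.injOn_compl_singleton {α β : Type*} [Finite α] {f : α → β}
    (hf : Function.Surjective f) (hcard : Nat.card α ≤ Nat.card β + 1) {x y : α} (hyx : y ≠ x)
    (hfyx : f y = f x) : Set.InjOn f {x}ᶜ := by
  rw [Set.injOn_iff_injective]
  refine (Function.Surjective.bijective_of_nat_card_le (fun b => ?_) ?_).injective
  · obtain ⟨a, rfl⟩ := hf b
    by_cases hax : a = x
    · exact ⟨⟨y, hyx⟩, by simp [hfyx, hax]⟩
    · exact ⟨⟨a, hax⟩, rfl⟩
  · rw [Nat.card_coe_set_eq, Set.ncard_compl, Set.ncard_singleton]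
    omega

section ConjClassesModCommutator

variable {G : Type*} [Group G]

theorem inv_mul_mem_commutator_of_isConj {a b : G} (h : IsConj a b) :
    a⁻¹ * b ∈ commutator G := by
  rw [← Abelianization.ker_of, ← MonoidHom.eq_iff]
  exact (isConj_iff_eq.1 (Abelianization.of.map_isConj h)).symm

variable [Finite G] (hN : commutator G ≠ ⊥)
  (hk : Nat.card (ConjClasses G) ≤ Nat.card (Abelianization G) + 1)
include hN hk

/-- The classes map onto `G/G'` and two of them, `{1}` and a class inside `G'`, have the same
image; so the map is injective away from `{1}`. -/
theorem isConj_of_inv_mul_mem_commutator {a b : G} (ha : a ≠ 1) (hb : b ≠ 1)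
    (hab : a⁻¹ * b ∈ commutator G) : IsConj a b := by
  obtain ⟨c, hc, hc1⟩ := (commutator G).bot_or_exists_ne_one.resolve_left hN
  have hne : ∀ x : G, x ≠ 1 → ConjClasses.mk x ∈ ({ConjClasses.mk 1}ᶜ : Set (ConjClasses G)) :=
    fun x hx h => hx (isConj_one_left.1 (ConjClasses.mk_eq_mk_iff_isConj.1 h))
  have hinj : Set.InjOn (ConjClasses.map (Abelianization.of (G := G))) {ConjClasses.mk 1}ᶜ := by
    refine (ConjClasses.map_surjective QuotientGroup.mk_surjective).injOn_compl_singleton ?_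
      (hne c hc1) ?_
    · rwa [← Nat.card_congr ConjClasses.mkEquiv]
    · have : Abelianization.of c = 1 := by rwa [← MonoidHom.mem_ker, Abelianization.ker_of]
      change ConjClasses.mk _ = ConjClasses.mk _
      rw [this, map_one]
  have hab' : Abelianization.of b = Abelianization.of a := by
    rwa [MonoidHom.eq_iff, Abelianization.ker_of]
  exact ConjClasses.mk_eq_mk_iff_isConj.1
    (hinj (hne a ha) (hne b hb) (congrArg ConjClasses.mk hab'.symm))

theorem conjClass_eq_commutator_diff_one {c : G} (hc : c ∈ commutator G) (hc1 : c ≠ 1) :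
    conjClass c = (commutator G : Set G) \ {1} := by
  ext x
  refine ⟨fun hx => ⟨?_, fun hx1 => hc1 ?_⟩, fun ⟨hx, hx1⟩ => ?_⟩
  · simpa using mul_mem hc (inv_mul_mem_commutator_of_isConj hx)
  · rw [Set.mem_singleton_iff] at hx1
    exact isConj_one_left.1 (hx1 ▸ hx)
  · exact isConj_of_inv_mul_mem_commutator hN hk hc1 hx1 (mul_mem (inv_mem hc) hx)

theorem conjClass_eq_smul_commutator {g : G} (hg : g ∉ commutator G) :
    conjClass g = g • (commutator G : Set G) := by
  ext x
  rw [mem_leftCoset_iff]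
  refine ⟨inv_mul_mem_commutator_of_isConj, fun hx => ?_⟩
  refine isConj_of_inv_mul_mem_commutator hN hk (fun hg1 => hg (hg1 ▸ one_mem _))
    (fun hx1 => hg ?_) hx
  simpa [hx1] using hx

end ConjClassesModCommutator

namespace MonoidAlgebra

variable {k G : Type*} [CommSemiring k] [Fintype G]

theorem coeff_sum_single (f : G → k) (g : G) : (∑ h, single h (f h)).coeff g = f g := by
  simp [coeff_sum, coeff_single, Finsupp.single_apply]

theorem sum_single_mem_center [Group G] {f : G → k} (hf : ∀ g h, f (h * g * h⁻¹) = f g) :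
    ∑ g, single g (f g) ∈ Submonoid.center k[G] := by
  rw [Submonoid.mem_center_iff]
  intro a
  induction a using MonoidAlgebra.induction_linear with
  | zero => simp
  | add x y hx hy => rw [add_mul, mul_add, hx, hy]
  | single h r =>
    rw [Finset.mul_sum, Finset.sum_mul]
    refine Fintype.sum_equiv (MulAut.conj h).toEquiv _ _ fun g => ?_
    simp [single_mul_single, mul_comm r, hf]

end MonoidAlgebra

namespace Representation

variable {k G : Type*} [Field k] [Monoid G]

theorem asAlgebraHom_ofModule' (M : Type*) [AddCommMonoid M] [Module k M] [Module k[G] M]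
    [IsScalarTower k k[G] M] (r : k[G]) (m : M) : (ofModule' M).asAlgebraHom r m = r • m := by
  simp [asAlgebraHom, ofModule']

instance isIrreducible_ofModule' (M : Type*) [AddCommGroup M] [Module k M] [Module k[G] M]
    [IsScalarTower k k[G] M] [IsSimpleModule k[G] M] :
    (ofModule' (k := k) (G := G) M).IsIrreducible :=
  (irreducible_iff_isSimpleModule_asModule _).2 <| IsSimpleModule.congr
    { (ofModule' M).asModuleEquiv with map_smul' := asAlgebraHom_ofModule' M }

variable {V : Type*} [AddCommGroup V] [Module k V]

theorem trace_asAlgebraHom_sum_single [Fintype G] (ρ : Representation k G V) (f : G → k) :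
    LinearMap.trace k V (ρ.asAlgebraHom (∑ g, single g (f g))) = ∑ g, f g * ρ.character g := by
  simp [character]

theorem IsIrreducible.asAlgebraHom_eq_zero [FiniteDimensional k V] [IsAlgClosed k] [CharZero k]
    (ρ : Representation k G V) [ρ.IsIrreducible] {z : k[G]} (hz : z ∈ Submonoid.center k[G])
    (htr : LinearMap.trace k V (ρ.asAlgebraHom z) = 0) : ρ.asAlgebraHom z = 0 := by
  obtain ⟨c, hc⟩ := algebraMap_intertwiningMap_bijective_of_isAlgClosed.2
    (IntertwiningMap.centralAlgebraMul ρ hz)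
  have hscalar : ρ.asAlgebraHom z = c • LinearMap.id :=
    (congrArg IntertwiningMap.toLinearMap hc).symm
  have : Nontrivial V := IsSimpleModule.nontrivial k[G] ρ.asModule
  rw [hscalar, map_smul, LinearMap.trace_id, smul_eq_mul, mul_eq_zero] at htr
  rw [hscalar, htr.resolve_right (by simp [finrank_pos.ne']), zero_smul]

end Representation

namespace FDRep

universe u

variable {k G : Type u} [Field k] [Group G]

theorem nontrivial_of_simple (V : FDRep k G) [Simple V] : Nontrivial V := by
  by_contra h
  rw [not_nontrivial_iff_subsingleton] at h
  exact id_nonzero V (by ext x; exact Subsingleton.elim _ _)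

noncomputable def characterHom (V : FDRep k G) (h : finrank k V = 1) : G →* kˣ :=
  MonoidHom.toHomUnits
    { toFun := V.character
      map_one' := by simp [h]
      map_mul' := fun g g' => by
        simp only [character, map_mul]
        exact LinearMap.trace_mul_of_finrank_eq_one h _ _ }

@[simp]
theorem coe_characterHom (V : FDRep k G) (h : finrank k V = 1) (g : G) :
    (V.characterHom h g : k) = V.character g := rfl

variable [IsAlgClosed k]

theorem simple_of_isIrreducible [Finite G] [NeZero (Nat.card G : k)] {V : Type u}
    [AddCommGroup V] [Module k V] [FiniteDimensional k V] (ρ : Representation k G V)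
    [ρ.IsIrreducible] : Simple (FDRep.of ρ) := by
  rw [simple_iff_end_is_rank_one, ← (Representation.linHom.invariantsEquivFDRepHom _ _).finrank_eq,
    of_ρ', (Representation.invariantsEquivIntertwiningMap ρ ρ).finrank_eq,
    Representation.IsIrreducible.finrank_intertwiningMap_self]

theorem exists_eq_smul_id_of_commute (V : FDRep k G) [Simple V] (φ : V →ₗ[k] V)
    (hφ : ∀ g, φ ∘ₗ V.ρ g = V.ρ g ∘ₗ φ) : ∃ c : k, φ = c • LinearMap.id := by
  let f : V ⟶ V := ⟨FGModuleCat.ofHom φ, fun g => by ext x; exact congr($(hφ g) x)⟩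
  obtain ⟨c, hc⟩ := endomorphism_simple_eq_smul_id k f
  exact ⟨c, congr(($hc).hom.hom.hom).symm⟩

/-- Every `V.ρ g` is a scalar, so `χ g * χ g⁻¹ = (dim V)²`, while `∑ g, χ g * χ g⁻¹ = |G|`. -/
theorem finrank_eq_one_of_isMulCommutative [CharZero k] [Fintype G] [IsMulCommutative G]
    (V : FDRep k G) [Simple V] : finrank k V = 1 := by
  have hsq : ∀ g, V.character g * V.character g⁻¹ = finrank k V * finrank k V := by
    intro g
    obtain ⟨c, hc⟩ := exists_eq_smul_id_of_commute V (V.ρ g) fun h => by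
      rw [← Module.End.mul_eq_comp, ← map_mul, mul_comm' g h, map_mul, Module.End.mul_eq_comp]
    have hinv : c • V.ρ g⁻¹ = V.ρ g⁻¹ * V.ρ g := by
      rw [hc, mul_smul_comm, ← Module.End.one_eq_id, mul_one]
    calc V.character g * V.character g⁻¹
        = finrank k V * LinearMap.trace k V (c • V.ρ g⁻¹) := by
          simp only [character, hc, map_smul, LinearMap.trace_id, smul_eq_mul]
          ring
      _ = finrank k V * finrank k V := by
          rw [hinv, ← map_mul, inv_mul_cancel, map_one, LinearMap.trace_one]
  have hnorm := (simple_iff_char_is_norm_one V).1 ‹_›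
  simp only [hsq, Finset.sum_const, Finset.card_univ, nsmul_eq_mul,
    ← Nat.card_eq_fintype_card] at hnorm
  rw [mul_eq_left₀ (Nat.cast_ne_zero.2 Nat.card_pos.ne')] at hnorm
  exact Nat.eq_one_of_mul_eq_one_right (by exact_mod_cast hnorm)

end FDRep

section Characters

variable {G : Type} [Group G]

theorem IsIrrChar.exists_monoidHom_of_re_le_one {χ : G → ℂ} (hχ : IsIrrChar G χ)
    (h1 : (χ 1).re ≤ 1) : ∃ μ : G →* ℂˣ, χ = fun g => (μ g : ℂ) := by
  obtain ⟨V, _, rfl⟩ := hχ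
  have := FDRep.nontrivial_of_simple V
  have hd : finrank ℂ V = 1 := by
    rw [FDRep.char_one, Complex.natCast_re, Nat.cast_le_one] at h1
    have := finrank_pos (R := ℂ) (M := V)
    omega
  exact ⟨V.characterHom hd, funext fun g => (V.coe_characterHom hd g).symm⟩

variable [Fintype G]

theorem IsNonlinChar.commutator_ne_bot {χ : G → ℂ} (hχ : IsNonlinChar G χ) :
    commutator G ≠ ⊥ := by
  intro hbot
  have := (commutator_eq_bot_iff G).1 hbot
  obtain ⟨⟨V, _, rfl⟩, h1⟩ := hχ
  simp [FDRep.finrank_eq_one_of_isMulCommutative V] at h1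

theorem nonempty_monoidHom_units_equiv_abelianization :
    Nonempty ((G →* ℂˣ) ≃ Abelianization G) := by
  have : NeZero (Monoid.exponent (Abelianization G) : ℂ) :=
    ⟨Nat.cast_ne_zero.2 Monoid.exponent_ne_zero_of_finite⟩
  obtain ⟨e⟩ := CommGroup.monoidHom_mulEquiv_of_hasEnoughRootsOfUnity (Abelianization G) ℂ
  exact ⟨Abelianization.lift.trans e.toEquiv⟩

theorem eq_zero_of_sum_mul_irrChar_eq_zero {f : G → ℂ} (hf : ∀ g h, f (h * g * h⁻¹) = f g)
    (horth : ∀ χ, IsIrrChar G χ → ∑ g, f g * χ g = 0) : f = 0 := by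
  set z : ℂ[G] := ∑ g, single g (f g) with hz_def
  have hz : z ∈ Submonoid.center ℂ[G] := sum_single_mem_center hf
  have hsimple : ∀ S : Submodule ℂ[G] ℂ[G], IsSimpleModule ℂ[G] S →
      S ≤ LinearMap.ker (LinearMap.toSpanSingleton ℂ[G] ℂ[G] z) := by
    intro S _ x hx
    have : FiniteDimensional ℂ S :=
      .of_injective ((S.subtype).restrictScalars ℂ) S.injective_subtype
    set ρ := Representation.ofModule' (k := ℂ) (G := G) S
    have hρ : ρ.asAlgebraHom z = 0 := by
      refine Representation.IsIrreducible.asAlgebraHom_eq_zero ρ hz ?_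
      rw [Representation.trace_asAlgebraHom_sum_single]
      exact horth _ ⟨FDRep.of ρ, FDRep.simple_of_isIrreducible ρ, rfl⟩
    have hzx := congr(($hρ ⟨x, hx⟩ : ℂ[G]))
    rw [Representation.asAlgebraHom_ofModule'] at hzx
    simpa [Submonoid.mem_center_iff.1 hz x] using hzx
  have hker : ⊤ ≤ LinearMap.ker (LinearMap.toSpanSingleton ℂ[G] ℂ[G] z) := by
    rw [← IsSemisimpleModule.sSup_simples_eq_top ℂ[G] ℂ[G]]
    exact sSup_le hsimple
  have hz0 : z = 0 := by simpa using hker (Submodule.mem_top (x := 1))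
  funext g
  rw [← coeff_sum_single f g, ← hz_def, hz0]
  rfl

theorem card_conjClasses_le_of_forall_isIrrChar_mem_range {ι : Type*} [Finite ι]
    (χ : ι → G → ℂ) (hχ : ∀ ψ, IsIrrChar G ψ → ψ ∈ Set.range χ) :
    Nat.card (ConjClasses G) ≤ Nat.card ι := by
  have := Fintype.ofFinite ι
  let T : (ConjClasses G → ℂ) →ₗ[ℂ] ι → ℂ := LinearMap.pi fun i =>
    Fintype.linearCombination ℂ (χ i) ∘ₗ LinearMap.funLeft ℂ ℂ ConjClasses.mk
  have hT : Function.Injective T := by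
    rw [← LinearMap.ker_eq_bot, LinearMap.ker_eq_bot']
    intro F hF
    have hF' : F ∘ ConjClasses.mk = 0 := by
      refine eq_zero_of_sum_mul_irrChar_eq_zero (fun g h => ?_) fun ψ hψ => ?_
      · simp only [Function.comp_apply]
        rw [ConjClasses.mk_eq_mk_iff_isConj.2 (isConj_iff.2 ⟨h, rfl⟩).symm]
      · obtain ⟨i, rfl⟩ := hχ ψ hψ
        simpa [T, Fintype.linearCombination_apply] using congrFun hF i
    funext c
    obtain ⟨g, rfl⟩ := ConjClasses.mk_surjective c
    exact congrFun hF' g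
  simpa [Nat.card_eq_fintype_card] using LinearMap.finrank_le_finrank_of_injective hT

theorem card_conjClasses_le_of_existsUnique_isNonlinChar (h : ∃! χ, IsNonlinChar G χ) :
    Nat.card (ConjClasses G) ≤ Nat.card (Abelianization G) + 1 := by
  obtain ⟨χ₀, -, huniq⟩ := h
  obtain ⟨e⟩ := nonempty_monoidHom_units_equiv_abelianization (G := G)
  have : Finite (G →* ℂˣ) := .of_equiv _ e.symm
  rw [← Nat.card_congr e, ← Finite.card_option]
  refine card_conjClasses_le_of_forall_isIrrChar_mem_range
    (fun o => o.elim χ₀ fun μ g => (μ g : ℂ)) fun ψ hψ => ?_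
  by_cases h1 : 1 < (ψ 1).re
  · exact ⟨none, (huniq ψ ⟨hψ, h1⟩).symm⟩
  · obtain ⟨μ, rfl⟩ := hψ.exists_monoidHom_of_re_le_one (not_lt.1 h1)
    exact ⟨some μ, rfl⟩

end Characters

theorem class_sizes_of_one_nonlinear (G : Type) [Group G] [Fintype G]
    (h : ∃! χ : G → ℂ, IsNonlinChar G χ) :
    (∀ c : G, c ∈ commutator G → c ≠ 1 →
        Nat.card (conjClass c) = Nat.card (commutator G) - 1) ∧
      ∀ g : G, g ∉ commutator G → Nat.card (conjClass g) = Nat.card (commutator G) := by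
  have hk := card_conjClasses_le_of_existsUnique_isNonlinChar h
  obtain ⟨χ₀, hχ₀, -⟩ := h
  have hN := hχ₀.commutator_ne_bot
  refine ⟨fun c hc hc1 => ?_, fun g hg => ?_⟩
  · rw [conjClass_eq_commutator_diff_one hN hk hc hc1, Nat.card_coe_set_eq,
      Set.ncard_sdiff_singleton_of_mem (one_mem _), ← Nat.card_coe_set_eq]
    rfl
  · rw [conjClass_eq_smul_commutator hN hk hg, Nat.card_coe_set_eq, Set.ncard_smul_set,
      ← Nat.card_coe_set_eq]
    rfl
end

section
/- Let G be a finite group with exactly one irreducible character χ of degree greater than 1. Then χ vanishes on G \ G', i.e., χ(g) = 0 for all g ∉ G'. -/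
open scoped Classical Pointwise

section Aux

open CategoryTheory

universe u
variable {k G : Type u} [Field k] [Group G]

/-- The representation `W` twisted by a linear character `l`. -/
noncomputable def twistRep (W : FDRep k G) (l : G →* kˣ) : Representation k G W where
  toFun g := (l g : k) • W.ρ g
  map_one' := by ext v; simp
  map_mul' g h := by
    show (l (g*h) : k) • W.ρ (g*h) = ((l g : k) • W.ρ g) * ((l h : k) • W.ρ h)
    rw [map_mul, map_mul, Units.val_mul, smul_mul_smul_comm]

/-- The `FDRep` given by twisting `W` by a linear character `l`. -/
noncomputable def twistObj (W : FDRep k G) (l : G →* kˣ) : FDRep k G := FDRep.of (twistRep W l)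

theorem twist_char (W : FDRep k G) (l : G →* kˣ) (g : G) :
    (twistObj W l).character g = (l g : k) * W.character g := by
  show LinearMap.trace k _ ((l g : k) • W.ρ g) = _
  rw [map_smul, smul_eq_mul]
  rfl

/-- Twisting by a linear character, as a functor. -/
noncomputable def twistFunctor (l : G →* kˣ) : FDRep k G ⥤ FDRep k G where
  obj W := twistObj W l
  map {V W} f := {
    hom := f.hom
    comm := by
      intro g
      ext v
      show f.hom ((l g : k) • V.ρ g v) = (l g : k) • W.ρ g (f.hom v)
      rw [map_smul]
      have h := f.comm g
      have : f.hom (V.ρ g v) = W.ρ g (f.hom v) := by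
        exact congrFun (congrArg (fun (m : _ ⟶ _) => (m : V → W)) h) v
      rw [this] }
  map_id := by intros; rfl
  map_comp := by intros; rfl

/-- Twisting twice by mutually inverse characters gives back the original representation. -/
noncomputable def twistTwistIso (W : FDRep k G) (l₁ l₂ : G →* kˣ)
    (h : ∀ g, (l₂ g : k) * (l₁ g : k) = 1) : twistObj (twistObj W l₁) l₂ ≅ W where
  hom := {
    hom := 𝟙 W.V
    comm := by
      intro g
      ext v
      show (l₂ g : k) • (l₁ g : k) • W.ρ g v = W.ρ g v
      rw [smul_smul, h, one_smul] }
  inv := {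
    hom := 𝟙 W.V
    comm := by
      intro g
      ext v
      show W.ρ g v = (l₂ g : k) • (l₁ g : k) • W.ρ g v
      rw [smul_smul, h, one_smul] }
  hom_inv_id := rfl
  inv_hom_id := rfl

/-- Twisting by a linear character is an equivalence of categories. -/
noncomputable def twistEquiv (l : G →* kˣ) : FDRep k G ≌ FDRep k G :=
  CategoryTheory.Equivalence.mk (twistFunctor l) (twistFunctor l⁻¹)
    (NatIso.ofComponents
      (fun W => (twistTwistIso W l l⁻¹ (fun g => by simp)).symm)
      (by intro X Y f; ext; rfl))
    (NatIso.ofComponents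
      (fun W => twistTwistIso W l⁻¹ l (fun g => by simp))
      (by intro X Y f; ext; rfl))

open Limits in
/-- An equivalence of categories (compatible with zero morphisms) preserves simplicity. -/
lemma simple_of_equiv {C D : Type*} [Category C] [Category D]
    [HasZeroMorphisms C] [HasZeroMorphisms D]
    (e : C ≌ D) [e.functor.PreservesZeroMorphisms] [e.inverse.PreservesZeroMorphisms]
    (X : C) [Simple X] : Simple (e.functor.obj X) := by
  constructor
  intro Y f m
  haveI : Mono (e.inverse.map f) := inferInstance
  haveI : Simple ((𝟭 C).obj X) := inferInstanceAs (Simple X)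
  haveI : Mono (e.inverse.map f ≫ (e.unitIso.app X).inv) := mono_comp _ _
  have key := Simple.mono_isIso_iff_nonzero (e.inverse.map f ≫ (e.unitIso.app X).inv)
  constructor
  · intro hf h0
    haveI : IsIso (e.inverse.map f) := inferInstance
    have hiso : IsIso (e.inverse.map f ≫ (e.unitIso.app X).inv) := inferInstance
    have : e.inverse.map f ≫ (e.unitIso.app X).inv = 0 := by
      rw [h0, Functor.map_zero, zero_comp]
    exact (key.mp hiso) this
  · intro hf
    have hne : e.inverse.map f ≫ (e.unitIso.app X).inv ≠ 0 := by
      intro h0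
      apply hf
      have h1 : e.inverse.map f = 0 := by
        have h2 := congrArg (fun t => t ≫ (e.unitIso.app X).hom) h0
        simpa using h2
      apply e.inverse.map_injective
      rw [h1, Functor.map_zero]
    haveI : IsIso (e.inverse.map f ≫ (e.unitIso.app X).inv) := key.mpr hne
    haveI : IsIso (e.inverse.map f) := by
      have h3 : e.inverse.map f
          = (e.inverse.map f ≫ (e.unitIso.app X).inv) ≫ (e.unitIso.app X).hom := by simp
      rw [h3]; infer_instance
    exact isIso_of_reflects_iso f e.inverse

instance twistFunctor_pzm (l : G →* kˣ) :
    (twistFunctor (k := k) (G := G) l).PreservesZeroMorphisms := ⟨by intros; ext; rfl⟩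

lemma twist_simple (W : FDRep k G) (l : G →* kˣ) [Simple W] : Simple (twistObj W l) :=
  simple_of_equiv (twistEquiv l) W

end Aux

theorem vanishing_outside_derived (G : Type) [Group G] [Fintype G] (χ : G → ℂ)
    (hχ : IsIrrChar G χ) (hdeg : 1 < (χ 1).re)
    (huniq : ∀ ψ : G → ℂ, IsIrrChar G ψ → 1 < (ψ 1).re → ψ = χ) :
    ∀ g : G, g ∉ commutator G → χ g = 0 := by
  obtain ⟨V, hsV, rfl⟩ := hχ
  intro g hg
  haveI : Finite (Abelianization G) := Quotient.finite _
  haveI : NeZero ((Monoid.exponent (Abelianization G) : ℂ)) :=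
    ⟨by exact_mod_cast Monoid.exponent_ne_zero_of_finite⟩
  have hg1 : (Abelianization.of g : Abelianization G) ≠ 1 := by
    intro h
    exact hg ((QuotientGroup.eq_one_iff g).mp h)
  obtain ⟨φ, hφ⟩ := CommGroup.exists_apply_ne_one_of_hasEnoughRootsOfUnity
    (Abelianization G) ℂ hg1
  set l : G →* ℂˣ := φ.comp Abelianization.of with hl
  haveI := hsV
  haveI : CategoryTheory.Simple (twistObj V l) := twist_simple V l
  have hirr : IsIrrChar G (twistObj V l).character := ⟨twistObj V l, inferInstance, rfl⟩
  have hdeg' : 1 < ((twistObj V l).character 1).re := by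
    rw [twist_char]
    simpa using hdeg
  have := huniq _ hirr hdeg'
  have hgval := congrFun this g
  rw [twist_char] at hgval
  have hlg : (l g : ℂ) ≠ 1 := by
    intro h
    exact hφ (Units.val_eq_one.mp h)
  by_contra hne
  exact hlg (mul_right_cancel₀ hne (by rw [hgval, one_mul]))
end

section
/- Let G be a finite group with exactly two irreducible characters χ, ψ of degree greater than 1. If the restrictions of χ and ψ to G' are distinct (as class functions on G'), then χ and ψ both vanish on G \ G'. -/
open scoped Classical Pointwise

/-!
Twisting by a linear character `μ` is an autoequivalence of the representation category, so
`θ ↦ μθ` permutes the nonlinear irreducible characters. If `μ` is trivial on `G'`, then `μθ`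
agrees with `θ` on `G'`; as `χ` and `ψ` differ there, `μ` cannot swap them and must fix both.
For `g ∉ G'` pick such a `μ` with `μ g ≠ 1`: then `μ g · χ g = χ g` forces `χ g = 0`.
-/

open CategoryTheory

namespace Representation

variable {k G V : Type*} [CommSemiring k] [Monoid G] [AddCommMonoid V] [Module k V]

def twist (χ : G →* kˣ) (ρ : Representation k G V) : Representation k G V where
  toFun g := (χ g : k) • ρ g
  map_one' := by simp
  map_mul' g h := by simp only [map_mul, Units.val_mul, smul_mul_smul_comm]

@[simp]
theorem twist_apply (χ : G →* kˣ) (ρ : Representation k G V) (g : G) :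
    ρ.twist χ g = (χ g : k) • ρ g :=
  rfl

end Representation

namespace FDRep

variable {k G : Type*} [Field k] [Monoid G]

noncomputable abbrev twist (χ : G →* kˣ) (V : FDRep k G) : FDRep k G :=
  FDRep.of (Representation.twist χ V.ρ)

theorem char_twist (χ : G →* kˣ) (V : FDRep k G) (g : G) :
    (V.twist χ).character g = χ g * V.character g := by
  simp [character]

noncomputable def twistFunctor (χ : G →* kˣ) : FDRep k G ⥤ FDRep k G where
  obj V := V.twist χ
  map {V W} f := ⟨f.hom, fun g => by
    ext x
    change f.hom.hom.hom ((χ g : k) • V.ρ g x) = (χ g : k) • W.ρ g (f.hom.hom.hom x)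
    rw [map_smul]
    exact congrArg _ (LinearMap.congr_fun (congrArg (fun φ => φ.hom.hom) (f.comm g)) x)⟩

noncomputable def twistTwistIso {χ χ' : G →* kˣ} (h : χ * χ' = 1) (V : FDRep k G) :
    (V.twist χ').twist χ ≅ V :=
  Action.mkIso (Iso.refl _) fun g => by
    ext x
    change (χ g : k) • (χ' g : k) • V.ρ g x = V.ρ g x
    rw [smul_smul, ← Units.val_mul, ← MonoidHom.mul_apply, h, MonoidHom.one_apply, Units.val_one,
      one_smul]

noncomputable def twistEquiv (χ : G →* kˣ) : FDRep k G ≌ FDRep k G where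
  functor := twistFunctor χ
  inverse := twistFunctor χ⁻¹
  unitIso := NatIso.ofComponents (fun V => (twistTwistIso (inv_mul_cancel χ) V).symm)
    fun _ => by ext1; rfl
  counitIso := NatIso.ofComponents (twistTwistIso (mul_inv_cancel χ))
    fun _ => by ext1; rfl

theorem simple_twist (χ : G →* kˣ) (V : FDRep k G) [Simple V] : Simple (V.twist χ) :=
  simple_obj (twistEquiv χ).functor V

end FDRep

theorem exists_monoidHom_units_ne_one_of_notMem_commutator {G : Type*} [Group G] [Finite G]
    {g : G} (hg : g ∉ commutator G) :
    ∃ μ : G →* ℂˣ, commutator G ≤ μ.ker ∧ μ g ≠ 1 := by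
  have : NeZero (Monoid.exponent (Abelianization G) : ℂ) :=
    ⟨Nat.cast_ne_zero.mpr Monoid.exponent_ne_zero_of_finite⟩
  obtain ⟨φ, hφ⟩ := CommGroup.exists_apply_ne_one_of_hasEnoughRootsOfUnity (Abelianization G) ℂ
    (mt (QuotientGroup.eq_one_iff g).mp hg)
  refine ⟨φ.comp Abelianization.of, fun h hh => ?_, hφ⟩
  have : Abelianization.of h = 1 := (QuotientGroup.eq_one_iff h).mpr hh
  simp [this]

theorem IsNonlinChar.twist {G : Type} [Group G] {θ : G → ℂ} (hθ : IsNonlinChar G θ)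
    (μ : G →* ℂˣ) : IsNonlinChar G fun g => μ g * θ g := by
  obtain ⟨⟨V, hV, rfl⟩, hdeg⟩ := hθ
  exact ⟨⟨V.twist μ, FDRep.simple_twist μ V, funext fun g => (FDRep.char_twist μ V g).symm⟩,
    by simpa using hdeg⟩

theorem IsNonlinChar.apply_eq_zero_of_notMem_commutator {G : Type} [Group G] [Finite G]
    {θ η : G → ℂ} (hθ : IsNonlinChar G θ) (honly : ∀ φ, IsNonlinChar G φ → φ = θ ∨ φ = η)
    {h : G} (hh : h ∈ commutator G) (hθη : θ h ≠ η h) {g : G} (hg : g ∉ commutator G) :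
    θ g = 0 := by
  obtain ⟨μ, hker, hμg⟩ := exists_monoidHom_units_ne_one_of_notMem_commutator hg
  rcases honly _ (hθ.twist μ) with hfix | hswap
  · have : ((μ g : ℂ) - 1) * θ g = 0 := by rw [sub_mul, one_mul, congrFun hfix g, sub_self]
    exact (mul_eq_zero.mp this).resolve_left (sub_ne_zero.mpr (mt Units.val_eq_one.mp hμg))
  · refine absurd ?_ hθη
    simpa [MonoidHom.mem_ker.mp (hker hh)] using congrFun hswap h

theorem two_nonlinear_distinct_restriction_vanish_general (G : Type) [Group G] [Fintype G]
    (χ ψ : G → ℂ)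
    (hχ : IsNonlinChar G χ) (hψ : IsNonlinChar G ψ)
    (honly : ∀ φ : G → ℂ, IsNonlinChar G φ → φ = χ ∨ φ = ψ)
    (hres : ∃ g : G, g ∈ commutator G ∧ χ g ≠ ψ g) :
    ∀ g : G, g ∉ commutator G → χ g = 0 ∧ ψ g = 0 := by
  intro g hg
  obtain ⟨h, hh, hχψ⟩ := hres
  exact ⟨hχ.apply_eq_zero_of_notMem_commutator honly hh hχψ hg,
    hψ.apply_eq_zero_of_notMem_commutator (fun φ hφ => (honly φ hφ).symm) hh hχψ.symm hg⟩

theorem two_nonlinear_distinct_restriction_vanish (G : Type) [Group G] [Fintype G]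
    (χ ψ : G → ℂ) (hne : χ ≠ ψ)
    (hχ : IsNonlinChar G χ) (hψ : IsNonlinChar G ψ)
    (honly : ∀ φ : G → ℂ, IsNonlinChar G φ → φ = χ ∨ φ = ψ)
    (hres : ∃ g : G, g ∈ commutator G ∧ χ g ≠ ψ g) :
    ∀ g : G, g ∉ commutator G → χ g = 0 ∧ ψ g = 0 :=
  two_nonlinear_distinct_restriction_vanish_general G χ ψ hχ hψ honly hres
end
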